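/- Let s ∈ ℂ with Re(s) > 0 and s ≠ 1, and define the incomplete Riemann zeta function ζ(s, x) = (2^{s}/((2^{s}−2)·Γ(s))) ∫_{−∞}^{x} (x−t)^{s−1}/(e^{−t}+1) dt for x ≤ 0. Then for every x < 0, the function x ↦ ζ(s+1, x) is differentiable at x and ζ(s, x) = ((2^{s}−1)/(2^{s}−2)) · (∂/∂x) ζ(s+1, x). Here for u > 0 the complex power u^{w} means exp(w·log u). -/

import Mathlib

/-! Substituting `t = x - u`, `(₋∞I_x^s f)(x) = Γ(s)⁻¹ ∫₀^∞ u^(s-1) f(x - u) du`. If `f` and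
`f'` are bounded by `C eᵗ`, one may differentiate under the integral sign in `x`, and an
integration by parts in `u` (the boundary terms vanish since `Re s > 0`) turns
`∫₀^∞ uˢ f'(x - u) du` into `s ∫₀^∞ u^(s-1) f(x - u) du`; with `Γ(s + 1) = s Γ(s)` this is
`∂ₓ (₋∞I^(s+1) f) = ₋∞I^s f`. The logistic function `(e^(-t) + 1)⁻¹` and its derivative are
bounded by `eᵗ`, and `2^(s+1) - 2 = 2 (2ˢ - 1)` with `2ˢ ≠ 1` for `Re s > 0`, which gives the
constant. -/

open MeasureTheory Set

/-- The incomplete Riemann zeta function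
`ζ(s, x) = (2^s / ((2^s - 2) Γ(s))) ∫_{-∞}^x (x-t)^{s-1}/(exp (-t) + 1) dt`. -/
noncomputable def incompleteRiemannZeta (s : ℂ) (x : ℝ) : ℂ :=
  ((2 : ℂ) ^ s / (((2 : ℂ) ^ s - 2) * Complex.Gamma s)) *
    ∫ t in Set.Iic x, ((x - t : ℝ) : ℂ) ^ (s - 1) / ((Real.exp (-t) + 1 : ℝ) : ℂ)

open Filter Topology Real

theorem integral_Iic_eq_integral_Ioi_comp_sub {E : Type*} [NormedAddCommGroup E]
    [NormedSpace ℝ E] (g : ℝ → E) (x : ℝ) :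
    ∫ t in Iic x, g t = ∫ u in Ioi (0 : ℝ), g (x - u) := by
  have hpre : (fun u : ℝ => x - u) ⁻¹' Iic x = Ici 0 := by
    ext u; simp
  rw [← integral_Ici_eq_integral_Ioi, ← hpre,
    (Measure.measurePreserving_sub_left volume x).setIntegral_preimage_emb
      (Homeomorph.subLeft x).measurableEmbedding]

theorem integrableOn_rpow_mul_exp_sub {a : ℝ} (ha : -1 < a) (c : ℝ) :
    IntegrableOn (fun u : ℝ => u ^ a * exp (c - u)) (Ioi 0) := by
  have hΓ := (Real.GammaIntegral_convergent (s := a + 1) (by linarith)).const_mul (exp c)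
  refine IntegrableOn.congr_fun hΓ (fun u _ => ?_) measurableSet_Ioi
  simp only [add_sub_cancel_right, sub_eq_add_neg c, exp_add]
  ring

section CpowMulCompSub

variable {g g' : ℝ → ℂ} {C : ℝ}

theorem norm_cpow_mul_comp_sub_le (hgC : ∀ t, ‖g t‖ ≤ C * exp t) (w : ℂ) (x : ℝ) {u : ℝ}
    (hu : 0 < u) : ‖(u : ℂ) ^ w * g (x - u)‖ ≤ C * (u ^ w.re * exp (x - u)) := by
  rw [norm_mul, Complex.norm_cpow_eq_rpow_re_of_pos hu, mul_left_comm]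
  exact mul_le_mul_of_nonneg_left (hgC _) (by positivity)

theorem integrableOn_cpow_mul_comp_sub (hg : Continuous g) (hgC : ∀ t, ‖g t‖ ≤ C * exp t)
    {w : ℂ} (hw : -1 < w.re) (x : ℝ) :
    IntegrableOn (fun u : ℝ => (u : ℂ) ^ w * g (x - u)) (Ioi 0) := by
  have hmeas : AEStronglyMeasurable (fun u : ℝ => (u : ℂ) ^ w * g (x - u))
      (volume.restrict (Ioi 0)) := by
    refine ContinuousOn.aestronglyMeasurable ?_ measurableSet_Ioi
    refine ContinuousOn.mul (fun u hu => ?_) (by fun_prop)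
    exact (Complex.continuousAt_ofReal_cpow_const u w (Or.inr hu.ne')).continuousWithinAt
  refine ((integrableOn_rpow_mul_exp_sub hw x).const_mul C).mono' hmeas ?_
  exact (ae_restrict_iff' measurableSet_Ioi).2
    (Eventually.of_forall fun u hu => norm_cpow_mul_comp_sub_le hgC w x hu)

theorem hasDerivAt_integral_cpow_mul_comp_sub (hg : ∀ t, HasDerivAt g (g' t) t)
    (hg' : Continuous g') (hgC : ∀ t, ‖g t‖ ≤ C * exp t) (hg'C : ∀ t, ‖g' t‖ ≤ C * exp t)
    {w : ℂ} (hw : -1 < w.re) (x : ℝ) :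
    HasDerivAt (fun y => ∫ u in Ioi (0 : ℝ), (u : ℂ) ^ w * g (y - u))
      (∫ u in Ioi (0 : ℝ), (u : ℂ) ^ w * g' (x - u)) x := by
  have hgc : Continuous g := continuous_iff_continuousAt.2 fun t => (hg t).continuousAt
  have hC : 0 ≤ C := by simpa using (norm_nonneg _).trans (hgC 0)
  have hbound : ∀ᵐ u : ℝ ∂volume.restrict (Ioi 0), ∀ y ∈ Metric.ball x 1,
      ‖(u : ℂ) ^ w * g' (y - u)‖ ≤ C * (u ^ w.re * exp (x + 1 - u)) := by
    refine (ae_restrict_iff' measurableSet_Ioi).2 (Eventually.of_forall fun u hu y hy => ?_)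
    have hu : 0 < u := hu
    refine (norm_cpow_mul_comp_sub_le hg'C w y hu).trans ?_
    have hyx : y < x + 1 := by
      rw [Metric.mem_ball, Real.dist_eq, abs_sub_lt_iff] at hy; linarith
    gcongr
  have hderiv : ∀ᵐ u : ℝ ∂volume.restrict (Ioi 0), ∀ y ∈ Metric.ball x 1,
      HasDerivAt (fun y => (u : ℂ) ^ w * g (y - u)) ((u : ℂ) ^ w * g' (y - u)) y :=
    Eventually.of_forall fun u y _ =>
      ((hg (y - u)).comp_sub_const y u).const_mul _
  exact (hasDerivAt_integral_of_dominated_loc_of_deriv_le (Metric.ball_mem_nhds x one_pos)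
    (Eventually.of_forall fun y => (integrableOn_cpow_mul_comp_sub hgc hgC hw y).1)
    (integrableOn_cpow_mul_comp_sub hgc hgC hw x)
    (integrableOn_cpow_mul_comp_sub hg' hg'C hw x).1 hbound
    ((integrableOn_rpow_mul_exp_sub hw (x + 1)).const_mul C) hderiv).2

theorem integral_cpow_mul_deriv_comp_sub (hg : ∀ t, HasDerivAt g (g' t) t)
    (hg' : Continuous g') (hgC : ∀ t, ‖g t‖ ≤ C * exp t) (hg'C : ∀ t, ‖g' t‖ ≤ C * exp t)
    {s : ℂ} (hs : 0 < s.re) (x : ℝ) :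
    ∫ u in Ioi (0 : ℝ), (u : ℂ) ^ s * g' (x - u) =
      s * ∫ u in Ioi (0 : ℝ), (u : ℂ) ^ (s - 1) * g (x - u) := by
  have hgc : Continuous g := continuous_iff_continuousAt.2 fun t => (hg t).continuousAt
  have hs0 : s ≠ 0 := fun h => by simp [h] at hs
  have hpow : ∀ u ∈ Ioi (0 : ℝ),
      HasDerivAt (fun u : ℝ => (u : ℂ) ^ s) (s * (u : ℂ) ^ (s - 1)) u :=
    fun u hu => hasDerivAt_ofReal_cpow_const hu.ne' hs0
  have hshift : ∀ u ∈ Ioi (0 : ℝ), HasDerivAt (fun u => g (x - u)) (-g' (x - u)) u :=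
    fun u _ => by simpa using (hg (x - u)).comp_const_sub x u
  have hzero : Tendsto (fun u : ℝ => (u : ℂ) ^ s * g (x - u)) (𝓝[>] 0) (𝓝 0) := by
    have hcont : ContinuousAt (fun u : ℝ => (u : ℂ) ^ s * g (x - u)) 0 :=
      (Complex.continuousAt_ofReal_cpow_const 0 s (Or.inl hs)).mul (by fun_prop)
    simpa [Complex.zero_cpow hs0] using hcont.tendsto.mono_left nhdsWithin_le_nhds
  have hinfty : Tendsto (fun u : ℝ => (u : ℂ) ^ s * g (x - u)) atTop (𝓝 0) := by
    have hdecay := ((tendsto_rpow_mul_exp_neg_mul_atTop_nhds_zero s.re 1 one_pos).const_mul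
      (C * exp x))
    rw [mul_zero] at hdecay
    refine squeeze_zero_norm' ?_ hdecay
    filter_upwards [eventually_gt_atTop 0] with u hu
    refine (norm_cpow_mul_comp_sub_le hgC s x hu).trans_eq ?_
    rw [sub_eq_add_neg x, exp_add, neg_one_mul]
    ring
  have hparts := integral_Ioi_mul_deriv_eq_deriv_mul hpow hshift
    (by simp only [Pi.mul_def, mul_neg]
        exact (integrableOn_cpow_mul_comp_sub hg' hg'C (by linarith) x).neg)
    (by simp only [Pi.mul_def, mul_assoc]
        exact (integrableOn_cpow_mul_comp_sub hgc hgC (w := s - 1) (by simp; linarith) x).const_mul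
          s)
    hzero hinfty
  simpa only [mul_neg, integral_neg, zero_sub, sub_zero, neg_inj, mul_assoc,
    integral_const_mul] using hparts

end CpowMulCompSub

/-- The Riemann–Liouville fractional integral with lower bound `-∞`, `(₋∞I_x^s f)(x)`. -/
noncomputable def liouvilleIntegral (s : ℂ) (f : ℝ → ℂ) (x : ℝ) : ℂ :=
  (Complex.Gamma s)⁻¹ * ∫ t in Iic x, ((x - t : ℝ) : ℂ) ^ (s - 1) * f t

theorem liouvilleIntegral_eq_integral_Ioi (s : ℂ) (f : ℝ → ℂ) (x : ℝ) :
    liouvilleIntegral s f x =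
      (Complex.Gamma s)⁻¹ * ∫ u in Ioi (0 : ℝ), (u : ℂ) ^ (s - 1) * f (x - u) := by
  rw [liouvilleIntegral, integral_Iic_eq_integral_Ioi_comp_sub]
  simp only [sub_sub_cancel]

theorem hasDerivAt_liouvilleIntegral_add_one {f f' : ℝ → ℂ} {C : ℝ}
    (hf : ∀ t, HasDerivAt f (f' t) t) (hf' : Continuous f')
    (hfC : ∀ t, ‖f t‖ ≤ C * exp t) (hf'C : ∀ t, ‖f' t‖ ≤ C * exp t)
    {s : ℂ} (hs : 0 < s.re) (x : ℝ) :
    HasDerivAt (liouvilleIntegral (s + 1) f) (liouvilleIntegral s f x) x := by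
  have hs0 : s ≠ 0 := fun h => by simp [h] at hs
  have hI : liouvilleIntegral (s + 1) f =
      fun y => (Complex.Gamma (s + 1))⁻¹ * ∫ u in Ioi (0 : ℝ), (u : ℂ) ^ s * f (y - u) := by
    funext y
    rw [liouvilleIntegral_eq_integral_Ioi, add_sub_cancel_right]
  rw [hI, liouvilleIntegral_eq_integral_Ioi]
  refine ((hasDerivAt_integral_cpow_mul_comp_sub hf hf' hfC hf'C (by linarith) x).const_mul
    _).congr_deriv ?_
  rw [integral_cpow_mul_deriv_comp_sub hf hf' hfC hf'C hs, Complex.Gamma_add_one s hs0]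
  field_simp

theorem Real.sigmoid_le_exp (t : ℝ) : sigmoid t ≤ exp t := by
  have h := sigmoid_mul_rexp_neg t
  rw [exp_neg, ← div_eq_mul_inv, div_eq_iff (exp_pos t).ne'] at h
  rw [h]
  exact mul_le_of_le_one_left (exp_pos t).le (sigmoid_le_one _)

theorem hasDerivAt_liouvilleIntegral_sigmoid_add_one {s : ℂ} (hs : 0 < s.re) (x : ℝ) :
    HasDerivAt (liouvilleIntegral (s + 1) fun t => (sigmoid t : ℂ))
      (liouvilleIntegral s (fun t => (sigmoid t : ℂ)) x) x := by
  have hσ : ∀ t, HasDerivAt (fun t => (sigmoid t : ℂ))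
      ((sigmoid t * (1 - sigmoid t) : ℝ) : ℂ) t :=
    fun t => (hasDerivAt_sigmoid t).ofReal_comp
  have hσC : ∀ t, ‖(sigmoid t : ℂ)‖ ≤ 1 * exp t := fun t => by
    rw [Complex.norm_real, Real.norm_of_nonneg (sigmoid_nonneg t), one_mul]
    exact sigmoid_le_exp t
  have hσ'C : ∀ t, ‖((sigmoid t * (1 - sigmoid t) : ℝ) : ℂ)‖ ≤ 1 * exp t := fun t => by
    rw [Complex.norm_real, Real.norm_of_nonneg
      (mul_nonneg (sigmoid_nonneg t) (sub_nonneg.2 (sigmoid_le_one t))), one_mul]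
    exact (mul_le_of_le_one_right (sigmoid_nonneg t) (sub_le_self _ (sigmoid_nonneg t))).trans
      (sigmoid_le_exp t)
  exact hasDerivAt_liouvilleIntegral_add_one hσ (by fun_prop) hσC hσ'C hs x

theorem incompleteRiemannZeta_eq_mul_liouvilleIntegral (s : ℂ) (x : ℝ) :
    incompleteRiemannZeta s x =
      (2 : ℂ) ^ s / ((2 : ℂ) ^ s - 2) * liouvilleIntegral s (fun t => (sigmoid t : ℂ)) x := by
  simp only [incompleteRiemannZeta, liouvilleIntegral, sigmoid_def, div_eq_mul_inv,
    Complex.ofReal_inv, add_comm (exp _), mul_inv, mul_assoc]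

theorem Complex.ofReal_cpow_ne_one {a : ℝ} (ha : 1 < a) {s : ℂ} (hs : 0 < s.re) :
    (a : ℂ) ^ s ≠ 1 := by
  intro h
  have hnorm := Complex.norm_cpow_eq_rpow_re_of_pos (by linarith : (0 : ℝ) < a) s
  rw [h, norm_one] at hnorm
  exact (Real.one_lt_rpow ha hs).ne hnorm

theorem incompleteRiemannZeta_eq_deriv_succ_general
    (s : ℂ) (hs : 0 < s.re) (x : ℝ) :
    DifferentiableAt ℝ (fun y : ℝ => incompleteRiemannZeta (s + 1) y) x ∧
    incompleteRiemannZeta s x =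
      (((2 : ℂ) ^ s - 1) / ((2 : ℂ) ^ s - 2)) *
        deriv (fun y : ℝ => incompleteRiemannZeta (s + 1) y) x := by
  have hD := (hasDerivAt_liouvilleIntegral_sigmoid_add_one hs x).const_mul
    ((2 : ℂ) ^ (s + 1) / ((2 : ℂ) ^ (s + 1) - 2))
  simp only [← incompleteRiemannZeta_eq_mul_liouvilleIntegral] at hD
  refine ⟨hD.differentiableAt, ?_⟩
  have h1 : (2 : ℂ) ^ s - 1 ≠ 0 :=
    sub_ne_zero.2 (by exact_mod_cast Complex.ofReal_cpow_ne_one one_lt_two hs)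
  have hcoeff : ((2 : ℂ) ^ s - 1) * ((2 : ℂ) ^ (s + 1) / ((2 : ℂ) ^ (s + 1) - 2)) = 2 ^ s := by
    rw [Complex.cpow_add _ _ two_ne_zero, Complex.cpow_one,
      show (2 : ℂ) ^ s * 2 - 2 = 2 * (2 ^ s - 1) by ring]
    field_simp
  rw [hD.deriv, incompleteRiemannZeta_eq_mul_liouvilleIntegral, ← mul_assoc,
    div_mul_eq_mul_div (_ - 1), hcoeff]

/-- Recursive functional relationship of the incomplete Riemann zeta function through
differentiation: for `Re s > 0`, `s ≠ 1` and `x < 0`, `x ↦ ζ(s+1, x)` is differentiable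
at `x` and `ζ(s, x) = ((2^s - 1)/(2^s - 2)) ∂ₓ ζ(s+1, x)`. -/
theorem incompleteRiemannZeta_eq_deriv_succ
    (s : ℂ) (hs : 0 < s.re) (hs1 : s ≠ 1) (x : ℝ) (hx : x < 0) :
    DifferentiableAt ℝ (fun y : ℝ => incompleteRiemannZeta (s + 1) y) x ∧
    incompleteRiemannZeta s x =
      (((2 : ℂ) ^ s - 1) / ((2 : ℂ) ^ s - 2)) *
        deriv (fun y : ℝ => incompleteRiemannZeta (s + 1) y) x :=
  incompleteRiemannZeta_eq_deriv_succ_general s hs x
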